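/- arXiv:math/0508648 — 3 statements merged into one kernel-verified Lean document; each statement's English description precedes it below -/
import Mathlib

section
/- Let K be a (skew) field and γ: K → K a ring automorphism. The skew Laurent polynomial ring K_γ[t^{±1}] is a Euclidean ring with respect to the degree function: for all f, g ∈ K_γ[t^{±1}] with g ≠ 0, there exist a, r ∈ K_γ[t^{±1}] such that f = g·a + r and either r = 0 or deg(r) < deg(g). -/
/-- A model of the skew Laurent polynomial ring `K_γ[t^{±1}]`: a ring `R` together with
an embedding `ι : K → R`, a unit `t` satisfying `t * ι a = ι (γ a) * t`, such that the
elements `ι a * t^i` form a basis, i.e. every element of `R` is uniquely a finite sum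
`∑ ι aᵢ * t^i`. -/
structure SkewLaurent (K : Type) [DivisionRing K] (γ : K ≃+* K) (R : Type) [Ring R] where
  ι : K →+* R
  t : Rˣ
  tcomm : ∀ a : K, (t : R) * ι a = ι (γ a) * (t : R)
  repr : (ℤ →₀ K) ≃+ R
  repr_single : ∀ (i : ℤ) (a : K), repr (Finsupp.single i a) = ι a * ((t ^ i : Rˣ) : R)

namespace SkewLaurent
variable {K : Type} [DivisionRing K] {γ : K ≃+* K} {R : Type} [Ring R]

/-- The degree `n - m` of a nonzero skew Laurent polynomial `∑_{i=m}^n aᵢ t^i`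
(with `a_m ≠ 0`, `a_n ≠ 0`); junk value `0` for `f = 0`. -/
noncomputable def deg (S : SkewLaurent K γ R) (f : R) : ℤ :=
  if h : (S.repr.symm f).support.Nonempty then
    (S.repr.symm f).support.max' h - (S.repr.symm f).support.min' h
  else 0

end SkewLaurent

/-!
Division by `g` is the usual leading-term elimination. If `f` and `g` span the exponent ranges
`[m_f, n_f]` and `[m_g, n_g]` with `n_g - m_g ≤ n_f - m_f`, then `g * (c t^(n_f - n_g))` spans
`[m_g + n_f - n_g, n_f] ⊆ [m_f, n_f]`, and since `t^i c = γ^i(c) t^i` a suitable `c` makes its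
top coefficient equal to that of `f`. Subtracting it leaves exponents in `[m_f, n_f - 1]`, so the
degree drops, and induction on the degree finishes the proof.
-/

theorem exists_eq_mul_add_of_exists_sub_mul_lt {R : Type*} [Ring R] (d : R → ℤ) {g : R}
    (step : ∀ f, d g ≤ d f → ∃ x, f - g * x = 0 ∨ d (f - g * x) < d f) (f : R) :
    ∃ a r, f = g * a + r ∧ (r = 0 ∨ d r < d g) := by
  -- with the `+ 1` the measure also drops on a step from `d f = d g` to `d (f - g * x) < d g`
  induction hn : (d f - d g + 1).toNat using Nat.strong_induction_on generalizing f with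
  | _ n ih =>
  by_cases hlt : d f < d g
  · exact ⟨0, f, by simp, .inr hlt⟩
  obtain ⟨x, hx⟩ := step f (not_lt.mp hlt)
  obtain ⟨a, r, heq, hr⟩ : ∃ a r, f - g * x = g * a + r ∧ (r = 0 ∨ d r < d g) := by
    rcases hx with hzero | hdeg
    · exact ⟨0, 0, by simp [hzero], .inl rfl⟩
    · exact ih _ (by omega) _ rfl
  exact ⟨x + a, r, by rw [mul_add, add_assoc, ← heq]; abel, hr⟩

namespace SkewLaurent

variable {K : Type} [DivisionRing K] {γ : K ≃+* K} {R : Type} [Ring R] (S : SkewLaurent K γ R)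

theorem semiconjBy_t_zpow (k : ℤ) (a : K) :
    SemiconjBy ((S.t ^ k : Rˣ) : R) (S.ι a) (S.ι ((γ ^ k) a)) := by
  induction k using Int.induction_on generalizing a with
  | zero => simp
  | succ n ih =>
    rw [zpow_add_one, zpow_add_one, Units.val_mul, RingAut.mul_apply]
    exact (ih (γ a)).mul_left (S.tcomm a)
  | pred n ih =>
    have h := SemiconjBy.units_inv_symm_left (S.tcomm (γ.symm a))
    rw [γ.apply_symm_apply] at h
    rw [zpow_sub_one, zpow_sub_one, Units.val_mul, RingAut.mul_apply]
    exact (ih _).mul_left h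

theorem monomial_mul_monomial (a c : K) (i k : ℤ) :
    S.ι a * ((S.t ^ i : Rˣ) : R) * (S.ι c * ((S.t ^ k : Rˣ) : R)) =
      S.ι (a * (γ ^ i) c) * ((S.t ^ (i + k) : Rˣ) : R) := by
  rw [mul_assoc, ← mul_assoc ((S.t ^ i : Rˣ) : R), (S.semiconjBy_t_zpow i c).eq, zpow_add,
    Units.val_mul, map_mul]
  simp only [mul_assoc]

theorem coeff_mul_monomial (x : R) (c : K) (k j : ℤ) :
    S.repr.symm (x * (S.ι c * ((S.t ^ k : Rˣ) : R))) j =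
      S.repr.symm x (j - k) * (γ ^ (j - k)) c := by
  classical
  obtain ⟨p, rfl⟩ := S.repr.surjective x
  rw [S.repr.symm_apply_apply]
  induction p using Finsupp.induction_linear with
  | zero => simp
  | add p q hp hq => simp only [map_add, add_mul, Finsupp.add_apply, hp, hq]
  | single i a =>
    rw [S.repr_single, monomial_mul_monomial, ← S.repr_single, S.repr.symm_apply_apply,
      Finsupp.single_apply, Finsupp.single_apply]
    split_ifs with h₁ h₂ h₂
    · rw [h₂]
    · omega
    · omega
    · rw [zero_mul]

theorem deg_eq {x : R} (hx : (S.repr.symm x).support.Nonempty) :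
    S.deg x = (S.repr.symm x).support.max' hx - (S.repr.symm x).support.min' hx :=
  dif_pos hx

theorem deg_le_of_support_subset_Icc {x : R} (hx : x ≠ 0) {m n : ℤ}
    (h : (S.repr.symm x).support ⊆ Finset.Icc m n) : S.deg x ≤ n - m := by
  have hne : (S.repr.symm x).support.Nonempty := by simpa using hx
  rw [S.deg_eq hne]
  have hmax := Finset.mem_Icc.mp (h (Finset.max'_mem _ hne))
  have hmin := Finset.mem_Icc.mp (h (Finset.min'_mem _ hne))
  omega

theorem exists_sub_mul_eq_zero_or_deg_lt {f g : R} (hg : g ≠ 0) (hgf : S.deg g ≤ S.deg f) :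
    ∃ x, f - g * x = 0 ∨ S.deg (f - g * x) < S.deg f := by
  rcases eq_or_ne f 0 with rfl | hf
  · exact ⟨0, .inl (by simp)⟩
  set P := S.repr.symm f
  set Q := S.repr.symm g
  have hP : P.support.Nonempty := by simpa [P] using hf
  have hQ : Q.support.Nonempty := by simpa [Q] using hg
  rw [S.deg_eq hP, S.deg_eq hQ] at hgf
  set nf := P.support.max' hP
  set mf := P.support.min' hP
  set ng := Q.support.max' hQ
  set mg := Q.support.min' hQ
  have hQng : Q ng ≠ 0 := Finsupp.mem_support_iff.mp (Finset.max'_mem _ hQ)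
  set c := (γ ^ ng).symm ((Q ng)⁻¹ * P nf)
  set X := S.ι c * ((S.t ^ (nf - ng) : Rˣ) : R) with hX
  refine ⟨X, or_iff_not_imp_left.mpr fun hne => ?_⟩
  have hcoeff : ∀ j, S.repr.symm (f - g * X) j =
      P j - Q (j - (nf - ng)) * (γ ^ (j - (nf - ng))) c := fun j => by
    rw [map_sub, Finsupp.sub_apply, hX, coeff_mul_monomial]
  have hsupp : (S.repr.symm (f - g * X)).support ⊆ Finset.Icc mf (nf - 1) := by
    intro j hj
    rw [Finsupp.mem_support_iff, hcoeff] at hj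
    have hj_mem : mf ≤ j ∧ j ≤ nf := by
      by_cases hPj : P j = 0
      · have hQj : j - (nf - ng) ∈ Q.support :=
          Finsupp.mem_support_iff.mpr fun h => hj (by simp [hPj, h])
        have := Q.support.min'_le _ hQj
        have := Q.support.le_max' _ hQj
        omega
      · have hPj' : j ∈ P.support := Finsupp.mem_support_iff.mpr hPj
        exact ⟨P.support.min'_le _ hPj', P.support.le_max' _ hPj'⟩
    have hj_ne : j ≠ nf := by
      rintro rfl
      apply hj
      rw [sub_sub_cancel, RingEquiv.apply_symm_apply, mul_inv_cancel_left₀ hQng, sub_self]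
    exact Finset.mem_Icc.mpr ⟨hj_mem.1, by omega⟩
  calc S.deg (f - g * X) ≤ nf - 1 - mf :=
        S.deg_le_of_support_subset_Icc hne hsupp
    _ < nf - mf := by omega
    _ = S.deg f := (S.deg_eq hP).symm

end SkewLaurent

/-- The skew Laurent polynomial ring `K_γ[t^{±1}]` is Euclidean with
respect to the degree function: for all `f, g` with `g ≠ 0` there are `a, r` with
`f = g * a + r` and either `r = 0` or `deg r < deg g`. -/
theorem skewLaurent_euclidean
    (K : Type) [DivisionRing K] (γ : K ≃+* K) (R : Type) [Ring R]
    (S : SkewLaurent K γ R) (f g : R) (hg : g ≠ 0) :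
    ∃ a r : R, f = g * a + r ∧ (r = 0 ∨ S.deg r < S.deg g) :=
  exists_eq_mul_add_of_exists_sub_mul_lt S.deg (fun _ => S.exists_sub_mul_eq_zero_or_deg_lt hg) f
end

section
/- Let K be a (skew) field, γ: K → K a ring automorphism, and let a ≠ b be elements of K. Then the elements 1 − a t and 1 − b t of the skew Laurent polynomial ring K_γ[t^{±1}] generate the unit right ideal, i.e. they are coprime: (1 − a t)·K_γ[t^{±1}] + (1 − b t)·K_γ[t^{±1}] = K_γ[t^{±1}]. -/
/-- For `a ≠ b` in the skew field `K`, the elements `1 - a t` and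
`1 - b t` of the skew Laurent polynomial ring `K_γ[t^{±1}]` generate the unit right
ideal: `(1 - a t)·K_γ[t^{±1}] + (1 - b t)·K_γ[t^{±1}] = K_γ[t^{±1}]`. -/
theorem skewLaurent_coprime
    (K : Type) [DivisionRing K] (γ : K ≃+* K) (R : Type) [Ring R]
    (S : SkewLaurent K γ R) (a b : K) (hab : a ≠ b) :
    ∃ x y : R, (1 - S.ι a * (S.t : R)) * x + (1 - S.ι b * (S.t : R)) * y = 1 := by
  refine ⟨((S.t⁻¹ : Rˣ) : R) * S.ι ((b - a)⁻¹), -(((S.t⁻¹ : Rˣ) : R) * S.ι ((b - a)⁻¹)), ?_⟩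
  have hba : b - a ≠ 0 := sub_ne_zero.mpr hab.symm
  have h1 : (S.ι b - S.ι a) * (S.t : R) * (((S.t⁻¹ : Rˣ) : R) * S.ι ((b - a)⁻¹)) = 1 := by
    rw [← map_sub, mul_assoc, ← mul_assoc (S.t : R), Units.mul_inv, one_mul, ← map_mul,
      mul_inv_cancel₀ hba, map_one]
  calc (1 - S.ι a * (S.t : R)) * (((S.t⁻¹ : Rˣ) : R) * S.ι ((b - a)⁻¹)) +
      (1 - S.ι b * (S.t : R)) * -(((S.t⁻¹ : Rˣ) : R) * S.ι ((b - a)⁻¹))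
      = (S.ι b - S.ι a) * (S.t : R) * (((S.t⁻¹ : Rˣ) : R) * S.ι ((b - a)⁻¹)) := by noncomm_ring
    _ = 1 := h1
end

section
/- Let K be a (skew) field, γ an automorphism of K, and let A ∈ GL(d, K_γ[t^{±1}]) be a matrix invertible over the skew Laurent polynomial ring itself. Then deg(det(A)) = 0, where det denotes the Dieudonné determinant of A viewed as an invertible matrix over the quotient skew field K_γ(t); equivalently, det(A) ∈ K_γ(t)^×_{ab} is represented by an element of the form k t^e with k ∈ K∖{0}, e ∈ ℤ. -/
set_option maxHeartbeats 1000000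

namespace SkewLaurent
variable {K : Type} [DivisionRing K] {γ : K ≃+* K} {R : Type} [Ring R]

variable (S : SkewLaurent K γ R)

lemma tpow_comm : ∀ (n : ℤ) (b : K),
    ((S.t ^ n : Rˣ) : R) * S.ι b = S.ι ((γ ^ n : K ≃+* K) b) * ((S.t ^ n : Rˣ) : R) := by
  have key : ∀ (n : ℤ), (∀ b : K, ((S.t ^ n : Rˣ) : R) * S.ι b
      = S.ι ((γ ^ n : K ≃+* K) b) * ((S.t ^ n : Rˣ) : R)) := by
    intro n
    induction n using Int.induction_on with
    | zero => intro b; simp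
    | succ k ih =>
      intro b
      have h1 : (S.t ^ ((k : ℤ) + 1) : Rˣ) = S.t ^ (k : ℤ) * S.t := by
        rw [zpow_add_one]
      have h2 : (γ ^ ((k : ℤ) + 1) : K ≃+* K) b = (γ ^ (k : ℤ) : K ≃+* K) (γ b) := by
        rw [zpow_add_one]; rfl
      rw [h1, h2, Units.val_mul, mul_assoc, S.tcomm b, ← mul_assoc, ih (γ b), mul_assoc]
    | pred k ih =>
      intro b
      have h1 : (S.t ^ (-(k : ℤ) - 1) : Rˣ) = S.t ^ (-(k : ℤ)) * S.t⁻¹ := by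
        rw [← zpow_neg_one, ← zpow_add]; ring_nf
      have h2 : (γ ^ (-(k : ℤ) - 1) : K ≃+* K) b = (γ ^ (-(k : ℤ)) : K ≃+* K) (γ⁻¹ b) := by
        have : (-(k : ℤ) - 1) = (-(k : ℤ)) + (-1) := by ring
        rw [this, zpow_add]; rfl
      have htinv : ((S.t⁻¹ : Rˣ) : R) * S.ι b = S.ι (γ⁻¹ b) * ((S.t⁻¹ : Rˣ) : R) := by
        have := S.tcomm (γ⁻¹ b)
        have hb : γ (γ⁻¹ b) = b := γ.apply_symm_apply b
        rw [hb] at this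
        calc ((S.t⁻¹ : Rˣ) : R) * S.ι b
            = ((S.t⁻¹ : Rˣ) : R) * (S.ι b * ((S.t : Rˣ) : R)) * ((S.t⁻¹ : Rˣ) : R) := by
              rw [mul_assoc, mul_assoc]; simp
          _ = ((S.t⁻¹ : Rˣ) : R) * (((S.t : Rˣ) : R) * S.ι (γ⁻¹ b)) * ((S.t⁻¹ : Rˣ) : R) := by
              rw [this]
          _ = S.ι (γ⁻¹ b) * ((S.t⁻¹ : Rˣ) : R) := by
              rw [← mul_assoc]; simp [mul_assoc]
      rw [h1, h2, Units.val_mul, mul_assoc, htinv, ← mul_assoc, ih (γ⁻¹ b), mul_assoc]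
  exact key

lemma single_mul (m n : ℤ) (a b : K) :
    S.repr (Finsupp.single m a) * S.repr (Finsupp.single n b)
      = S.repr (Finsupp.single (m + n) (a * (γ ^ m : K ≃+* K) b)) := by
  rw [S.repr_single, S.repr_single, S.repr_single]
  have : ((S.t ^ m : Rˣ) : R) * (S.ι b * ((S.t ^ n : Rˣ) : R))
      = S.ι ((γ ^ m : K ≃+* K) b) * ((S.t ^ (m + n) : Rˣ) : R) := by
    rw [← mul_assoc, S.tpow_comm m b, mul_assoc, zpow_add, Units.val_mul]
  rw [mul_assoc, this, map_mul, ← mul_assoc]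

lemma single_corner_hi (a : ℤ) (b : K) (n : ℤ) (q : ℤ →₀ K)
    (hq : ∀ x ∈ q.support, x ≤ n) :
    (∀ x ∈ (S.repr.symm (S.repr (Finsupp.single a b) * S.repr q)).support, x ≤ a + n) ∧
      (S.repr.symm (S.repr (Finsupp.single a b) * S.repr q)) (a + n)
        = b * (γ ^ a : K ≃+* K) (q n) := by
  induction q using Finsupp.induction with
  | zero =>
    simp
  | single_add a' b' f' ha' hb' ih =>
    have hsupp : (Finsupp.single a' b' + f').support
        = (Finsupp.single a' b').support ∪ f'.support := by
      apply Finsupp.support_add_eq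
      rw [Finsupp.support_single_ne_zero a' hb']
      simpa using ha'
    have ha'n : a' ≤ n := by
      apply hq
      rw [hsupp, Finsupp.support_single_ne_zero a' hb']
      simp
    have hf'n : ∀ x ∈ f'.support, x ≤ n := by
      intro x hx; exact hq x (by rw [hsupp]; exact Finset.mem_union_right _ hx)
    obtain ⟨ih1, ih2⟩ := ih hf'n
    have hdec : S.repr (Finsupp.single a b) * S.repr (Finsupp.single a' b' + f')
        = S.repr (Finsupp.single (a + a') (b * (γ ^ a : K ≃+* K) b'))
          + S.repr (Finsupp.single a b) * S.repr f' := by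
      rw [map_add, mul_add, S.single_mul]
    constructor
    · intro x hx
      rw [hdec, map_add, S.repr.symm_apply_apply] at hx
      have := Finsupp.support_add hx
      rcases Finset.mem_union.1 this with h | h
      · have := Finsupp.support_single_subset h
        simp only [Finset.mem_singleton] at this
        omega
      · exact ih1 x h
    · rw [hdec, map_add S.repr.symm, S.repr.symm_apply_apply, Finsupp.add_apply, ih2,
        Finsupp.add_apply, map_add (γ ^ a : K ≃+* K), mul_add]
      congr 1
      by_cases hcase : a' = n
      · subst hcase; rw [Finsupp.single_eq_same, Finsupp.single_eq_same]
      · rw [Finsupp.single_apply, Finsupp.single_apply, if_neg (by omega), if_neg hcase]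
        simp

lemma single_corner_lo (a : ℤ) (b : K) (n : ℤ) (q : ℤ →₀ K)
    (hq : ∀ x ∈ q.support, n ≤ x) :
    (∀ x ∈ (S.repr.symm (S.repr (Finsupp.single a b) * S.repr q)).support, a + n ≤ x) ∧
      (S.repr.symm (S.repr (Finsupp.single a b) * S.repr q)) (a + n)
        = b * (γ ^ a : K ≃+* K) (q n) := by
  induction q using Finsupp.induction with
  | zero =>
    simp
  | single_add a' b' f' ha' hb' ih =>
    have hsupp : (Finsupp.single a' b' + f').support
        = (Finsupp.single a' b').support ∪ f'.support := by
      apply Finsupp.support_add_eq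
      rw [Finsupp.support_single_ne_zero a' hb']
      simpa using ha'
    have ha'n : n ≤ a' := by
      apply hq
      rw [hsupp, Finsupp.support_single_ne_zero a' hb']
      simp
    have hf'n : ∀ x ∈ f'.support, n ≤ x := by
      intro x hx; exact hq x (by rw [hsupp]; exact Finset.mem_union_right _ hx)
    obtain ⟨ih1, ih2⟩ := ih hf'n
    have hdec : S.repr (Finsupp.single a b) * S.repr (Finsupp.single a' b' + f')
        = S.repr (Finsupp.single (a + a') (b * (γ ^ a : K ≃+* K) b'))
          + S.repr (Finsupp.single a b) * S.repr f' := by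
      rw [map_add, mul_add, S.single_mul]
    constructor
    · intro x hx
      rw [hdec, map_add, S.repr.symm_apply_apply] at hx
      have := Finsupp.support_add hx
      rcases Finset.mem_union.1 this with h | h
      · have := Finsupp.support_single_subset h
        simp only [Finset.mem_singleton] at this
        omega
      · exact ih1 x h
    · rw [hdec, map_add S.repr.symm, S.repr.symm_apply_apply, Finsupp.add_apply, ih2,
        Finsupp.add_apply, map_add (γ ^ a : K ≃+* K), mul_add]
      congr 1
      by_cases hcase : a' = n
      · subst hcase; rw [Finsupp.single_eq_same, Finsupp.single_eq_same]
      · rw [Finsupp.single_apply, Finsupp.single_apply, if_neg (by omega), if_neg hcase]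
        simp

lemma corner_hi (p q : ℤ →₀ K) (m n : ℤ)
    (hp : ∀ x ∈ p.support, x ≤ m) (hq : ∀ x ∈ q.support, x ≤ n) :
    (∀ x ∈ (S.repr.symm (S.repr p * S.repr q)).support, x ≤ m + n) ∧
      (S.repr.symm (S.repr p * S.repr q)) (m + n) = p m * (γ ^ m : K ≃+* K) (q n) := by
  induction p using Finsupp.induction with
  | zero => simp
  | single_add a b f ha hb ih =>
    have hsupp : (Finsupp.single a b + f).support
        = (Finsupp.single a b).support ∪ f.support := by
      apply Finsupp.support_add_eq
      rw [Finsupp.support_single_ne_zero a hb]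
      simpa using ha
    have ham : a ≤ m := by
      apply hp; rw [hsupp, Finsupp.support_single_ne_zero a hb]; simp
    have hfm : ∀ x ∈ f.support, x ≤ m := by
      intro x hx; exact hp x (by rw [hsupp]; exact Finset.mem_union_right _ hx)
    obtain ⟨ih1, ih2⟩ := ih hfm
    obtain ⟨s1, s2⟩ := S.single_corner_hi a b n q hq
    have hdec : S.repr (Finsupp.single a b + f) * S.repr q
        = S.repr (Finsupp.single a b) * S.repr q + S.repr f * S.repr q := by
      rw [map_add, add_mul]
    constructor
    · intro x hx
      rw [hdec, map_add] at hx
      have := Finsupp.support_add hx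
      rcases Finset.mem_union.1 this with h | h
      · have := s1 x h; omega
      · exact ih1 x h
    · rw [hdec, map_add S.repr.symm, Finsupp.add_apply, ih2, Finsupp.add_apply, add_mul]
      congr 1
      by_cases hcase : a = m
      · subst hcase
        rw [s2, Finsupp.single_eq_same]
      · have h0 : (S.repr.symm (S.repr (Finsupp.single a b) * S.repr q)) (m + n) = 0 := by
          rw [← Finsupp.notMem_support_iff]
          intro hmem
          have := s1 _ hmem; omega
        rw [h0, Finsupp.single_apply, if_neg hcase, zero_mul]

lemma corner_lo (p q : ℤ →₀ K) (m n : ℤ)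
    (hp : ∀ x ∈ p.support, m ≤ x) (hq : ∀ x ∈ q.support, n ≤ x) :
    (∀ x ∈ (S.repr.symm (S.repr p * S.repr q)).support, m + n ≤ x) ∧
      (S.repr.symm (S.repr p * S.repr q)) (m + n) = p m * (γ ^ m : K ≃+* K) (q n) := by
  induction p using Finsupp.induction with
  | zero => simp
  | single_add a b f ha hb ih =>
    have hsupp : (Finsupp.single a b + f).support
        = (Finsupp.single a b).support ∪ f.support := by
      apply Finsupp.support_add_eq
      rw [Finsupp.support_single_ne_zero a hb]
      simpa using ha
    have ham : m ≤ a := by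
      apply hp; rw [hsupp, Finsupp.support_single_ne_zero a hb]; simp
    have hfm : ∀ x ∈ f.support, m ≤ x := by
      intro x hx; exact hp x (by rw [hsupp]; exact Finset.mem_union_right _ hx)
    obtain ⟨ih1, ih2⟩ := ih hfm
    obtain ⟨s1, s2⟩ := S.single_corner_lo a b n q hq
    have hdec : S.repr (Finsupp.single a b + f) * S.repr q
        = S.repr (Finsupp.single a b) * S.repr q + S.repr f * S.repr q := by
      rw [map_add, add_mul]
    constructor
    · intro x hx
      rw [hdec, map_add] at hx
      have := Finsupp.support_add hx
      rcases Finset.mem_union.1 this with h | h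
      · have := s1 x h; omega
      · exact ih1 x h
    · rw [hdec, map_add S.repr.symm, Finsupp.add_apply, ih2, Finsupp.add_apply, add_mul]
      congr 1
      by_cases hcase : a = m
      · subst hcase
        rw [s2, Finsupp.single_eq_same]
      · have h0 : (S.repr.symm (S.repr (Finsupp.single a b) * S.repr q)) (m + n) = 0 := by
          rw [← Finsupp.notMem_support_iff]
          intro hmem
          have := s1 _ hmem; omega
        rw [h0, Finsupp.single_apply, if_neg hcase, zero_mul]

noncomputable def hi (f : R) : ℤ :=
  if h : (S.repr.symm f).support.Nonempty then (S.repr.symm f).support.max' h else 0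

noncomputable def lo (f : R) : ℤ :=
  if h : (S.repr.symm f).support.Nonempty then (S.repr.symm f).support.min' h else 0

lemma supp_nonempty_iff (f : R) : (S.repr.symm f).support.Nonempty ↔ f ≠ 0 := by
  rw [Finsupp.support_nonempty_iff]
  constructor
  · intro h hf; apply h; rw [hf, map_zero]
  · intro h hf; apply h
    have : f = S.repr (S.repr.symm f) := (S.repr.apply_symm_apply f).symm
    rw [this, hf, map_zero]

lemma deg_eq_s9 (f : R) : S.deg f = S.hi f - S.lo f := by
  unfold deg hi lo
  by_cases h : (S.repr.symm f).support.Nonempty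
  · rw [dif_pos h, dif_pos h, dif_pos h]
  · rw [dif_neg h, dif_neg h, dif_neg h]; ring

lemma deg_nonneg (f : R) : 0 ≤ S.deg f := by
  unfold deg
  by_cases h : (S.repr.symm f).support.Nonempty
  · rw [dif_pos h]
    have hx := Finset.max'_mem (S.repr.symm f).support h
    have := Finset.min'_le (S.repr.symm f).support _ hx
    omega
  · rw [dif_neg h]

lemma le_hi (f : R) (x : ℤ) (hx : x ∈ (S.repr.symm f).support) : x ≤ S.hi f := by
  have h : (S.repr.symm f).support.Nonempty := ⟨x, hx⟩
  unfold hi; rw [dif_pos h]; exact Finset.le_max' _ _ hx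

lemma lo_le (f : R) (x : ℤ) (hx : x ∈ (S.repr.symm f).support) : S.lo f ≤ x := by
  have h : (S.repr.symm f).support.Nonempty := ⟨x, hx⟩
  unfold lo; rw [dif_pos h]; exact Finset.min'_le _ _ hx

lemma hi_mem (f : R) (hf : f ≠ 0) : S.hi f ∈ (S.repr.symm f).support := by
  have h := (S.supp_nonempty_iff f).2 hf
  unfold hi; rw [dif_pos h]; exact Finset.max'_mem _ _

lemma lo_mem (f : R) (hf : f ≠ 0) : S.lo f ∈ (S.repr.symm f).support := by
  have h := (S.supp_nonempty_iff f).2 hf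
  unfold lo; rw [dif_pos h]; exact Finset.min'_mem _ _

lemma mul_spec (f g : R) (hf : f ≠ 0) (hg : g ≠ 0) :
    f * g ≠ 0 ∧ S.hi (f * g) = S.hi f + S.hi g ∧ S.lo (f * g) = S.lo f + S.lo g := by
  have hfr : S.repr (S.repr.symm f) = f := S.repr.apply_symm_apply f
  have hgr : S.repr (S.repr.symm g) = g := S.repr.apply_symm_apply g
  obtain ⟨b1, b2⟩ := S.corner_hi (S.repr.symm f) (S.repr.symm g) (S.hi f) (S.hi g)
    (fun x hx => S.le_hi f x hx) (fun x hx => S.le_hi g x hx)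
  obtain ⟨c1, c2⟩ := S.corner_lo (S.repr.symm f) (S.repr.symm g) (S.lo f) (S.lo g)
    (fun x hx => S.lo_le f x hx) (fun x hx => S.lo_le g x hx)
  rw [hfr, hgr] at b1 b2 c1 c2
  have hne : (S.repr.symm (f * g)) (S.hi f + S.hi g) ≠ 0 := by
    rw [b2]
    apply mul_ne_zero
    · exact Finsupp.mem_support_iff.1 (S.hi_mem f hf)
    · intro h0
      have : (S.repr.symm g) (S.hi g) = 0 := by
        have hinj : Function.Injective (γ ^ (S.hi f) : K ≃+* K) := (γ ^ (S.hi f)).injective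
        apply hinj; rw [h0, map_zero]
      exact Finsupp.mem_support_iff.1 (S.hi_mem g hg) this
  have hne2 : (S.repr.symm (f * g)) (S.lo f + S.lo g) ≠ 0 := by
    rw [c2]
    apply mul_ne_zero
    · exact Finsupp.mem_support_iff.1 (S.lo_mem f hf)
    · intro h0
      have : (S.repr.symm g) (S.lo g) = 0 := by
        have hinj : Function.Injective (γ ^ (S.lo f) : K ≃+* K) := (γ ^ (S.lo f)).injective
        apply hinj; rw [h0, map_zero]
      exact Finsupp.mem_support_iff.1 (S.lo_mem g hg) this
  have hmem : (S.hi f + S.hi g) ∈ (S.repr.symm (f * g)).support := Finsupp.mem_support_iff.2 hne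
  have hmem2 : (S.lo f + S.lo g) ∈ (S.repr.symm (f * g)).support := Finsupp.mem_support_iff.2 hne2
  have hfg : f * g ≠ 0 := by
    intro h0
    rw [h0, map_zero] at hne; exact hne rfl
  refine ⟨hfg, ?_, ?_⟩
  · apply le_antisymm
    · exact b1 _ (S.hi_mem (f * g) hfg)
    · exact S.le_hi _ _ hmem
  · apply le_antisymm (S.lo_le _ _ hmem2)
    have hb := S.lo_mem (f * g) hfg
    exact c1 _ hb

include S in
lemma mul_ne_zero' (f g : R) (hf : f ≠ 0) (hg : g ≠ 0) : f * g ≠ 0 :=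
  by exact (S.mul_spec f g hf hg).1

lemma deg_mul (f g : R) (hf : f ≠ 0) (hg : g ≠ 0) : S.deg (f * g) = S.deg f + S.deg g := by
  obtain ⟨h0, h1, h2⟩ := S.mul_spec f g hf hg
  rw [S.deg_eq_s9, S.deg_eq_s9, S.deg_eq_s9, h1, h2]; ring

lemma div_step (a b : R) (ha : a ≠ 0) (hb : b ≠ 0) (hba : S.deg b ≤ S.deg a) :
    ∃ q r : R, a = q * b + r ∧ (r = 0 ∨ S.deg r < S.deg a) := by
  set m : ℤ := S.hi a - S.hi b with hm
  have hcb : (S.repr.symm b) (S.hi b) ≠ 0 := Finsupp.mem_support_iff.1 (S.hi_mem b hb)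
  have hgcb : (γ ^ m : K ≃+* K) ((S.repr.symm b) (S.hi b)) ≠ 0 := by
    intro h0
    exact hcb ((γ ^ m : K ≃+* K).injective (by rw [h0, map_zero]))
  set k : K := (S.repr.symm a) (S.hi a) * ((γ ^ m : K ≃+* K) ((S.repr.symm b) (S.hi b)))⁻¹
    with hk
  set q : R := S.repr (Finsupp.single m k) with hq
  refine ⟨q, a - q * b, by abel, ?_⟩
  have hqb : q * b = S.repr (Finsupp.single m k) * S.repr (S.repr.symm b) := by
    rw [hq, S.repr.apply_symm_apply]
  have hsingle_bd : ∀ x ∈ (Finsupp.single m k).support, x ≤ m := by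
    intro x hx
    have := Finsupp.support_single_subset hx
    simp only [Finset.mem_singleton] at this; omega
  have hsingle_bd2 : ∀ x ∈ (Finsupp.single m k).support, m ≤ x := by
    intro x hx
    have := Finsupp.support_single_subset hx
    simp only [Finset.mem_singleton] at this; omega
  obtain ⟨u1, u2⟩ := S.corner_hi (Finsupp.single m k) (S.repr.symm b) m (S.hi b)
    hsingle_bd (fun x hx => S.le_hi b x hx)
  obtain ⟨l1, _⟩ := S.corner_lo (Finsupp.single m k) (S.repr.symm b) m (S.lo b)
    hsingle_bd2 (fun x hx => S.lo_le b x hx)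
  rw [← hqb] at u1 u2 l1
  have hmhib : m + S.hi b = S.hi a := by omega
  have htopqb : (S.repr.symm (q * b)) (S.hi a) = (S.repr.symm a) (S.hi a) := by
    rw [← hmhib, u2, Finsupp.single_eq_same, hk, inv_mul_cancel_right₀ hgcb, hmhib]
  have hloqb : S.lo a ≤ m + S.lo b := by
    have hda := S.deg_eq_s9 a
    have hdb := S.deg_eq_s9 b
    omega
  have hsupp_r : ∀ x ∈ (S.repr.symm (a - q * b)).support, S.lo a ≤ x ∧ x ≤ S.hi a - 1 := by
    intro x hx
    rw [Finsupp.mem_support_iff, map_sub, Finsupp.sub_apply] at hx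
    constructor
    · by_contra hcon
      push_neg at hcon
      have h1 : (S.repr.symm a) x = 0 := by
        rw [← Finsupp.notMem_support_iff]
        intro hmem; exact absurd (S.lo_le a x hmem) (by omega)
      have h2 : (S.repr.symm (q * b)) x = 0 := by
        rw [← Finsupp.notMem_support_iff]
        intro hmem
        have := l1 x hmem; omega
      rw [h1, h2, sub_zero] at hx; exact hx rfl
    · by_contra hcon
      push_neg at hcon
      by_cases hx2 : x = S.hi a
      · subst hx2
        rw [htopqb, sub_self] at hx; exact hx rfl
      · have h1 : (S.repr.symm a) x = 0 := by
          rw [← Finsupp.notMem_support_iff]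
          intro hmem; exact absurd (S.le_hi a x hmem) (by omega)
        have h2 : (S.repr.symm (q * b)) x = 0 := by
          rw [← Finsupp.notMem_support_iff]
          intro hmem
          have := u1 x hmem; omega
        rw [h1, h2, sub_zero] at hx; exact hx rfl
  by_cases hr : a - q * b = 0
  · exact Or.inl hr
  · right
    have h1 := hsupp_r _ (S.hi_mem _ hr)
    have h2 := hsupp_r _ (S.lo_mem _ hr)
    have hda := S.deg_eq_s9 a
    have hdr := S.deg_eq_s9 (a - q * b)
    omega

lemma division (b : R) (hb : b ≠ 0) (a : R) :
    ∃ q r : R, a = q * b + r ∧ (r = 0 ∨ S.deg r < S.deg b) := by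
  suffices H : ∀ n : ℕ, ∀ a : R, (S.deg a).toNat ≤ n →
      ∃ q r : R, a = q * b + r ∧ (r = 0 ∨ S.deg r < S.deg b) by
    exact H (S.deg a).toNat a le_rfl
  intro n
  induction n with
  | zero =>
    intro a hdeg
    by_cases ha : a = 0
    · exact ⟨0, 0, by rw [ha]; simp, Or.inl rfl⟩
    by_cases hba : S.deg a < S.deg b
    · exact ⟨0, a, by simp, Or.inr hba⟩
    push_neg at hba
    obtain ⟨q, r, h1, h2⟩ := S.div_step a b ha hb hba
    rcases h2 with h2 | h2
    · exact ⟨q, r, h1, Or.inl h2⟩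
    · have := S.deg_nonneg r
      have := S.deg_nonneg a
      omega
  | succ n ih =>
    intro a hdeg
    by_cases ha : a = 0
    · exact ⟨0, 0, by rw [ha]; simp, Or.inl rfl⟩
    by_cases hba : S.deg a < S.deg b
    · exact ⟨0, a, by simp, Or.inr hba⟩
    push_neg at hba
    obtain ⟨q, r, h1, h2⟩ := S.div_step a b ha hb hba
    rcases h2 with h2 | h2
    · exact ⟨q, r, h1, Or.inl h2⟩
    · have hr : (S.deg r).toNat ≤ n := by
        have := S.deg_nonneg r
        omega
      obtain ⟨q', r', h1', h2'⟩ := ih r hr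
      exact ⟨q + q', r', by rw [h1, h1', add_mul, add_assoc], h2'⟩

lemma deg_zero_monomial (f : R) (hf : f ≠ 0) (h0 : S.deg f = 0) :
    ∃ (k : K) (e : ℤ), k ≠ 0 ∧ f = S.ι k * ((S.t ^ e : Rˣ) : R) := by
  have hd := S.deg_eq_s9 f
  set e : ℤ := S.lo f with he
  have hhl : S.hi f = S.lo f := by omega
  have hsingle : S.repr.symm f = Finsupp.single e ((S.repr.symm f) e) := by
    ext x
    by_cases hx : x = e
    · subst hx; rw [Finsupp.single_eq_same]
    · rw [Finsupp.single_apply, if_neg (fun h => hx h.symm)]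
      rw [← Finsupp.notMem_support_iff]
      intro hmem
      have := S.lo_le f x hmem
      have := S.le_hi f x hmem
      omega
  refine ⟨(S.repr.symm f) e, e, ?_, ?_⟩
  · rw [he]; exact Finsupp.mem_support_iff.1 (S.lo_mem f hf)
  · rw [← S.repr_single, ← hsingle, S.repr.apply_symm_apply]

lemma one_eq : (1 : R) = S.repr (Finsupp.single 0 1) := by
  rw [S.repr_single]; simp

include S in
lemma one_ne_zero' : (1 : R) ≠ 0 := by
  intro h
  rw [S.one_eq] at h
  have : Finsupp.single (0 : ℤ) (1 : K) = 0 := by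
    apply S.repr.injective; rw [h, map_zero]
  have h2 := Finsupp.ext_iff.1 this 0
  rw [Finsupp.single_eq_same] at h2
  exact one_ne_zero h2

lemma t_sub_one_ne_zero : ((S.t : R) - 1) ≠ 0 := by
  intro h
  have ht : (S.t : R) = S.repr (Finsupp.single 1 1) := by
    rw [S.repr_single]; simp
  rw [ht, S.one_eq, ← map_sub] at h
  have : Finsupp.single (1 : ℤ) (1 : K) - Finsupp.single 0 1 = 0 := by
    apply S.repr.injective; rw [h, map_zero]
  have h2 := Finsupp.ext_iff.1 this 1
  rw [Finsupp.sub_apply, Finsupp.single_eq_same, Finsupp.single_apply] at h2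
  simp at h2

include S in
lemma list_prod_ne_zero : ∀ l : List R, (∀ x ∈ l, x ≠ 0) → l.prod ≠ 0 := by
  intro l
  induction l with
  | nil => intro _; simpa using S.one_ne_zero'
  | cons x xs ih =>
    intro h
    rw [List.prod_cons]
    exact S.mul_ne_zero' _ _ (h x (by simp)) (ih (fun y hy => h y (by simp [hy])))

end SkewLaurent

section MatrixUtil
variable {Q : Type} [Ring Q] {d : ℕ}

lemma std_mul_apply (i k : Fin d) (c : Q) (N : Matrix (Fin d) (Fin d) Q) (x y : Fin d) :
    (Matrix.single i k c * N) x y = if x = i then c * N k y else 0 := by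
  rw [Matrix.mul_apply]
  by_cases hx : x = i
  · subst hx
    rw [if_pos rfl, Finset.sum_eq_single k]
    · simp [Matrix.single]
    · intro z _ hz; simp [Matrix.single, Ne.symm hz]
    · intro h; exact absurd (Finset.mem_univ k) h
  · rw [if_neg hx]
    apply Finset.sum_eq_zero
    intro z _
    simp [Matrix.single, Ne.symm hx]

lemma addrow_apply (i k : Fin d) (c : Q) (N : Matrix (Fin d) (Fin d) Q) (x y : Fin d) :
    ((1 + Matrix.single i k c) * N) x y
      = N x y + (if x = i then c * N k y else 0) := by
  rw [add_mul, one_mul, Matrix.add_apply, std_mul_apply]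

def tvec (i k : Fin d) (hik : i ≠ k) (c : Q) : (Matrix (Fin d) (Fin d) Q)ˣ where
  val := 1 + Matrix.single i k c
  inv := 1 - Matrix.single i k c
  val_inv := by
    have h0 : Matrix.single i k c * Matrix.single i k c = 0 :=
      Matrix.single_mul_single_of_ne c i k i (Ne.symm hik) c
    rw [mul_sub, mul_one, add_mul, one_mul, h0, add_zero, add_sub_cancel_right]
  inv_val := by
    have h0 : Matrix.single i k c * Matrix.single i k c = 0 :=
      Matrix.single_mul_single_of_ne c i k i (Ne.symm hik) c
    rw [sub_mul, one_mul, mul_add, mul_one, h0, add_zero, add_sub_cancel_right]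

@[simp] lemma tvec_val (i k : Fin d) (hik : i ≠ k) (c : Q) :
    (tvec i k hik c).val = 1 + Matrix.single i k c := rfl

def dunit (v : Fin d → Qˣ) : (Matrix (Fin d) (Fin d) Q)ˣ where
  val := Matrix.diagonal (fun i => (v i : Q))
  inv := Matrix.diagonal (fun i => ((v i)⁻¹ : Qˣ))
  val_inv := by rw [Matrix.diagonal_mul_diagonal]; simp
  inv_val := by rw [Matrix.diagonal_mul_diagonal]; simp

@[simp] lemma dunit_val (v : Fin d → Qˣ) :
    (dunit v).val = Matrix.diagonal (fun i => (v i : Q)) := rfl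

lemma diag_mul_std (v : Fin d → Q) (i k : Fin d) (c : Q) :
    Matrix.diagonal v * Matrix.single i k c = Matrix.single i k (v i * c) := by
  ext x y
  rw [Matrix.diagonal_mul]
  simp only [Matrix.single, Matrix.of_apply, ite_and]
  by_cases hx : i = x
  · subst hx; simp
  · simp [hx]

lemma std_mul_diag (v : Fin d → Q) (i k : Fin d) (c : Q) :
    Matrix.single i k c * Matrix.diagonal v = Matrix.single i k (c * v k) := by
  ext x y
  rw [Matrix.mul_diagonal]
  simp only [Matrix.single, Matrix.of_apply, ite_and]
  by_cases hy : k = y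
  · subst hy; simp
  · simp [hy]

end MatrixUtil

section Dlemmas
variable {Q : Type} [DivisionRing Q] {d : ℕ}
variable (D : (Matrix (Fin d) (Fin d) Q)ˣ →* Abelianization Qˣ)

lemma D_comm_eq_one (x y : (Matrix (Fin d) (Fin d) Q)ˣ) : D (x * y * x⁻¹ * y⁻¹) = 1 := by
  rw [map_mul, map_mul, map_mul, map_inv, map_inv, mul_comm (D x) (D y)]
  group

lemma D_tvec (a : Q) (ha : a ≠ 0) (ha1 : a - 1 ≠ 0)
    (i k : Fin d) (hik : i ≠ k) (c : Q) : D (tvec i k hik c) = 1 := by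
  by_cases hc : c = 0
  · have : tvec i k hik c = 1 := by
      apply Units.ext
      rw [tvec_val, hc]
      simp
    rw [this, map_one]
  · set au : Qˣ := Units.mk0 a ha with hau
    set du := dunit (fun x => if x = i then au else 1) with hdu
    set c' : Q := (a - 1)⁻¹ * c with hc'
    have hcc : a * c' - c' = c := by
      rw [← sub_one_mul, hc', ← mul_assoc, mul_inv_cancel₀ ha1, one_mul]
    have key : tvec i k hik c = du * tvec i k hik c' * du⁻¹ * (tvec i k hik c')⁻¹ := by
      apply Units.ext
      rw [Units.val_mul, Units.val_mul, Units.val_mul]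
      have hfun1 : (fun x => ((if x = i then au else 1 : Qˣ) : Q))
          = (fun x => if x = i then a else 1) := by
        funext x
        by_cases hx : x = i <;> simp [hx, hau]
      have hduv : du.val = Matrix.diagonal (fun x => if x = i then a else 1) := by
        rw [hdu, dunit_val, hfun1]
      have hduiv : (du⁻¹).val = Matrix.diagonal (fun x => if x = i then a⁻¹ else 1) := by
        show Matrix.diagonal _ = _
        ext x y
        by_cases hxy : x = y
        · subst hxy
          rw [Matrix.diagonal_apply_eq, Matrix.diagonal_apply_eq]
          by_cases hx : x = i <;> simp [hx, hau]
        · rw [Matrix.diagonal_apply_ne _ hxy, Matrix.diagonal_apply_ne _ hxy]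
      have htiv : ((tvec i k hik c')⁻¹).val = 1 - Matrix.single i k c' := rfl
      rw [hduv, hduiv, htiv, tvec_val, tvec_val]
      have step1 : Matrix.diagonal (fun x => if x = i then a else 1)
          * (1 + Matrix.single i k c')
          = Matrix.diagonal (fun x => if x = i then a else 1)
            + Matrix.single i k (a * c') := by
        rw [mul_add, mul_one, diag_mul_std, if_pos rfl]
      have step2 : (Matrix.diagonal (fun x => if x = i then a else 1)
            + Matrix.single i k (a * c'))
          * Matrix.diagonal (fun x => if x = i then a⁻¹ else 1)
          = 1 + Matrix.single i k (a * c') := by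
        rw [add_mul, Matrix.diagonal_mul_diagonal, std_mul_diag,
          if_neg (Ne.symm hik), mul_one]
        have hvv : (fun x => (if x = i then a else 1) * (if x = i then a⁻¹ else 1))
            = (fun _ : Fin d => (1:Q)) := by
          funext x
          by_cases hx : x = i <;> simp [hx, mul_inv_cancel₀ ha]
        rw [hvv, Matrix.diagonal_one]
      have hsub : Matrix.single i k (a * c') - Matrix.single i k c'
          = Matrix.single i k (a * c' - c') := by
        ext x y
        simp only [Matrix.sub_apply, Matrix.single, Matrix.of_apply]
        split_ifs with h
        · rfl
        · simp
      have step3 : (1 + Matrix.single i k (a * c'))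
          * (1 - Matrix.single i k c')
          = 1 + Matrix.single i k (a * c' - c') := by
        have h0 : Matrix.single i k (a * c') * Matrix.single i k c' = 0 :=
          Matrix.single_mul_single_of_ne _ i k i (Ne.symm hik) _
        rw [mul_sub, mul_one, add_mul, one_mul, h0, add_zero, add_sub_assoc, hsub]
      rw [step1, step2, step3, hcc]
    rw [key, D_comm_eq_one]
end Dlemmas

section Elim
variable {K : Type} [DivisionRing K] {γ : K ≃+* K} {R : Type} [Ring R]
variable {Q : Type} [DivisionRing Q] {d : ℕ}

def GoodDet (j : R →+* Q) (D : (Matrix (Fin d) (Fin d) Q)ˣ →* Abelianization Qˣ)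
    (N : Matrix (Fin d) (Fin d) R) : Prop :=
  ∀ u : (Matrix (Fin d) (Fin d) Q)ˣ, u.val = N.map j →
    ∃ (f : R) (w : Qˣ), f ≠ 0 ∧ (w : Q) = j f ∧ D u = Abelianization.of w

variable (j : R →+* Q) (D : (Matrix (Fin d) (Fin d) Q)ˣ →* Abelianization Qˣ)

lemma map_onestd (i k : Fin d) (r : R) :
    ((1 + Matrix.single i k r)).map j = 1 + Matrix.single i k (j r) := by
  ext x y
  simp [Matrix.map_apply, Matrix.add_apply, map_add, Matrix.one_apply,
    Matrix.single, apply_ite j]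

lemma steprow (htv : ∀ (i k : Fin d) (hik : i ≠ k) (c : Q), D (tvec i k hik c) = 1)
    (i k : Fin d) (hik : i ≠ k) (r : R) (N : Matrix (Fin d) (Fin d) R)
    (h : GoodDet j D ((1 + Matrix.single i k r) * N)) : GoodDet j D N := by
  intro u hu
  have hval : (tvec i k hik (j r) * u).val
      = ((1 + Matrix.single i k r) * N).map j := by
    rw [Units.val_mul, hu, Matrix.map_mul, map_onestd, tvec_val]
  obtain ⟨f, w, hf, hw, hDu⟩ := h (tvec i k hik (j r) * u) hval
  exact ⟨f, w, hf, hw, by rw [← hDu, map_mul, htv i k hik (j r), one_mul]⟩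

def swmat (i k : Fin d) : Matrix (Fin d) (Fin d) R :=
  (1 + Matrix.single i k 1) *
    ((1 + Matrix.single k i (-1)) * (1 + Matrix.single i k 1))

lemma swmat_mul_apply (i k : Fin d) (hik : i ≠ k) (N : Matrix (Fin d) (Fin d) R) (x y : Fin d) :
    ((swmat i k * N : Matrix (Fin d) (Fin d) R)) x y
      = if x = i then N k y else if x = k then -(N i y) else N x y := by
  unfold swmat
  rw [mul_assoc, mul_assoc]
  simp only [addrow_apply, one_mul, neg_mul]
  by_cases hx : x = i
  · subst hx
    simp only [if_pos rfl, if_neg hik, if_neg (Ne.symm hik), eq_self_iff_true, if_true]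
    abel
  · by_cases hx2 : x = k
    · subst hx2
      simp only [if_pos rfl, if_neg hx, if_neg (Ne.symm hik), eq_self_iff_true, if_true]
      abel
    · simp only [if_neg hx, if_neg hx2]
      abel

lemma stepswap (htv : ∀ (i k : Fin d) (hik : i ≠ k) (c : Q), D (tvec i k hik c) = 1)
    (i k : Fin d) (hik : i ≠ k) (N : Matrix (Fin d) (Fin d) R)
    (h : GoodDet j D (swmat i k * N)) : GoodDet j D N := by
  have h1 : GoodDet j D ((1 + Matrix.single i k 1) *
      ((1 + Matrix.single k i (-1)) * ((1 + Matrix.single i k 1) * N))) := by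
    have : (1 + Matrix.single i k 1) *
        ((1 + Matrix.single k i (-1)) * ((1 + Matrix.single i k 1) * N))
        = swmat i k * N := by
      unfold swmat
      rw [mul_assoc, mul_assoc]
    rw [this]
    exact h
  exact steprow j D htv i k hik 1 N
    (steprow j D htv k i (Ne.symm hik) (-1) _
      (steprow j D htv i k hik 1 _ h1))

end Elim

section Elim2
variable {R : Type} [Ring R]
variable {Q : Type} [DivisionRing Q] {d : ℕ}
variable (D : (Matrix (Fin d) (Fin d) Q)ˣ →* Abelianization Qˣ)

lemma D_unitri_aux (htv : ∀ (i k : Fin d) (hik : i ≠ k) (c : Q), D (tvec i k hik c) = 1) :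
    ∀ (m : ℕ) (u : (Matrix (Fin d) (Fin d) Q)ˣ),
      (∀ x, u.val x x = 1) →
      (∀ x y : Fin d, (y:ℕ) < (x:ℕ) → u.val x y = 0) →
      (∀ x y : Fin d, (x:ℕ) < (y:ℕ) → m ≤ (y:ℕ) → u.val x y = 0) →
      D u = 1 := by
  intro m
  induction m with
  | zero =>
    intro u h1 h2 h3
    have hu1 : u = 1 := by
      rw [← Units.val_eq_one]
      ext x y
      rcases lt_trichotomy (x:ℕ) (y:ℕ) with h | h | h
      · have hne : x ≠ y := fun hc => by subst hc; omega
        rw [h3 x y h (Nat.zero_le _), Matrix.one_apply_ne hne]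
      · have hxy : x = y := Fin.ext h
        subst hxy
        rw [h1 x, Matrix.one_apply_eq]
      · have hne : x ≠ y := fun hc => by subst hc; omega
        rw [h2 x y h, Matrix.one_apply_ne hne]
    rw [hu1, map_one]
  | succ m ih =>
    intro u h1 h2 h3
    by_cases hmd : d ≤ m
    · exact ih u h1 h2 (fun x y hxy hmy => absurd y.isLt (by omega))
    · classical
      set mf : Fin d := ⟨m, lt_of_not_ge hmd⟩ with hmfdef
      have hmf : (mf : ℕ) = m := rfl
      have inner : ∀ (s : ℕ) (u : (Matrix (Fin d) (Fin d) Q)ˣ),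
          (∀ x, u.val x x = 1) →
          (∀ x y : Fin d, (y:ℕ) < (x:ℕ) → u.val x y = 0) →
          (∀ x y : Fin d, (x:ℕ) < (y:ℕ) → m + 1 ≤ (y:ℕ) → u.val x y = 0) →
          (Finset.filter (fun x : Fin d => (x:ℕ) < m ∧ u.val x mf ≠ 0) Finset.univ).card ≤ s →
          D u = 1 := by
        intro s
        induction s with
        | zero =>
          intro u h1 h2 h3 hcard
          apply ih u h1 h2
          intro x y hxy hmy
          by_cases hym : (y:ℕ) = m
          · have hy : y = mf := Fin.ext (by rw [hym, hmf])
            subst hy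
            by_contra hv
            have hmem : x ∈ Finset.filter
                (fun x : Fin d => (x:ℕ) < m ∧ u.val x mf ≠ 0) Finset.univ :=
              Finset.mem_filter.2 ⟨Finset.mem_univ x, ⟨by omega, hv⟩⟩
            have := Finset.card_pos.2 ⟨x, hmem⟩
            omega
          · exact h3 x y hxy (by omega)
        | succ s ihs =>
          intro u h1 h2 h3 hcard
          by_cases hex : ∃ x : Fin d, (x:ℕ) < m ∧ u.val x mf ≠ 0
          · obtain ⟨x₀, hx₀m, hx₀⟩ := hex
            have hne : x₀ ≠ mf := by
              intro h
              rw [h, hmf] at hx₀m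
              omega
            set c : Q := - u.val x₀ mf with hc
            set u' := tvec x₀ mf hne c * u with hu'
            have hval : ∀ x y, u'.val x y
                = u.val x y + (if x = x₀ then c * u.val mf y else 0) := by
              intro x y
              rw [hu', Units.val_mul, tvec_val, addrow_apply]
            have hrowmf : ∀ y : Fin d, y ≠ mf → u.val mf y = 0 := by
              intro y hy
              rcases lt_trichotomy (y:ℕ) m with h | h | h
              · exact h2 mf y (by omega)
              · exact absurd (Fin.ext (by rw [h, hmf]) : y = mf) hy
              · exact h3 mf y (by omega) (by omega)
            have h1' : ∀ x, u'.val x x = 1 := by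
              intro x
              rw [hval]
              by_cases hx : x = x₀
              · subst hx
                rw [if_pos rfl, hrowmf x hne, mul_zero, add_zero, h1]
              · rw [if_neg hx, add_zero, h1]
            have h2' : ∀ x y : Fin d, (y:ℕ) < (x:ℕ) → u'.val x y = 0 := by
              intro x y hxy
              rw [hval]
              by_cases hx : x = x₀
              · subst hx
                have hymf : y ≠ mf := by
                  intro h
                  rw [h, hmf] at hxy
                  omega
                rw [if_pos rfl, hrowmf y hymf, mul_zero, add_zero, h2 x y hxy]
              · rw [if_neg hx, add_zero, h2 x y hxy]
            have h3' : ∀ x y : Fin d, (x:ℕ) < (y:ℕ) → m + 1 ≤ (y:ℕ) → u'.val x y = 0 := by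
              intro x y hxy hmy
              rw [hval]
              by_cases hx : x = x₀
              · subst hx
                have hymf : y ≠ mf := by
                  intro h
                  rw [h, hmf] at hmy
                  omega
                rw [if_pos rfl, hrowmf y hymf, mul_zero, add_zero, h3 x y hxy hmy]
              · rw [if_neg hx, add_zero, h3 x y hxy hmy]
            have hzero : u'.val x₀ mf = 0 := by
              rw [hval, if_pos rfl, h1 mf, mul_one, hc, add_neg_cancel]
            have hsame : ∀ x, x ≠ x₀ → u'.val x mf = u.val x mf := by
              intro x hx
              rw [hval, if_neg hx, add_zero]
            have hmemx₀ : x₀ ∈ Finset.filter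
                (fun x : Fin d => (x:ℕ) < m ∧ u.val x mf ≠ 0) Finset.univ :=
              Finset.mem_filter.2 ⟨Finset.mem_univ x₀, ⟨hx₀m, hx₀⟩⟩
            have hfilter : Finset.filter
                (fun x : Fin d => (x:ℕ) < m ∧ u'.val x mf ≠ 0) Finset.univ
                = (Finset.filter
                    (fun x : Fin d => (x:ℕ) < m ∧ u.val x mf ≠ 0) Finset.univ).erase x₀ := by
              ext z
              rw [Finset.mem_erase, Finset.mem_filter, Finset.mem_filter]
              constructor
              · intro ⟨hz1, hz2, hz3⟩
                have hzx₀ : z ≠ x₀ := by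
                  intro h
                  subst h
                  exact hz3 hzero
                rw [hsame z hzx₀] at hz3
                exact ⟨hzx₀, hz1, hz2, hz3⟩
              · intro ⟨hzx₀, hz1, hz2, hz3⟩
                rw [← hsame z hzx₀] at hz3
                exact ⟨hz1, hz2, hz3⟩
            have hcard' : (Finset.filter
                (fun x : Fin d => (x:ℕ) < m ∧ u'.val x mf ≠ 0) Finset.univ).card ≤ s := by
              rw [hfilter, Finset.card_erase_of_mem hmemx₀]
              omega
            have hDu' := ihs u' h1' h2' h3' hcard'
            rw [hu', map_mul, htv _ _ hne c, one_mul] at hDu'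
            exact hDu'
          · apply ih u h1 h2
            intro x y hxy hmy
            by_cases hym : (y:ℕ) = m
            · have hy : y = mf := Fin.ext (by rw [hym, hmf])
              subst hy
              by_contra hv
              exact hex ⟨x, by omega, hv⟩
            · exact h3 x y hxy (by omega)
      exact inner (Finset.filter
        (fun x : Fin d => (x:ℕ) < m ∧ u.val x mf ≠ 0) Finset.univ).card u h1 h2 h3 le_rfl

lemma D_unitri (htv : ∀ (i k : Fin d) (hik : i ≠ k) (c : Q), D (tvec i k hik c) = 1)
    (u : (Matrix (Fin d) (Fin d) Q)ˣ)
    (h1 : ∀ x, u.val x x = 1)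
    (h2 : ∀ x y : Fin d, (y:ℕ) < (x:ℕ) → u.val x y = 0) : D u = 1 :=
  D_unitri_aux D htv d u h1 h2 (fun x y _ hdy => absurd y.isLt (by omega))

end Elim2

section Elim3
variable {K : Type} [DivisionRing K] {γ : K ≃+* K} {R : Type} [Ring R]
variable {Q : Type} [DivisionRing Q] {d : ℕ}
variable (S : SkewLaurent K γ R)
variable (j : R →+* Q) (D : (Matrix (Fin d) (Fin d) Q)ˣ →* Abelianization Qˣ)

include S in
lemma gooddet_triangular (hj : Function.Injective j)
    (htv : ∀ (i k : Fin d) (hik : i ≠ k) (c : Q), D (tvec i k hik c) = 1)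
    (hD : ∀ (v : Fin d → Qˣ) (M : (Matrix (Fin d) (Fin d) Q)ˣ),
      M.val = Matrix.diagonal (fun i => (v i : Q)) →
      D M = ∏ i, Abelianization.of (v i))
    (N : Matrix (Fin d) (Fin d) R)
    (htri : ∀ x y : Fin d, (y:ℕ) < (x:ℕ) → N x y = 0)
    (hpiv : ∀ x, N x x ≠ 0) : GoodDet j D N := by
  intro u hu
  have hjz : ∀ r : R, r ≠ 0 → j r ≠ 0 := by
    intro r hr h0
    exact hr (hj (by rw [h0, map_zero]))
  set v : Fin d → Qˣ := fun i => Units.mk0 (j (N i i)) (hjz _ (hpiv i)) with hv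
  set Δ : (Matrix (Fin d) (Fin d) Q)ˣ := dunit v with hΔ
  set U : (Matrix (Fin d) (Fin d) Q)ˣ := Δ⁻¹ * u with hU
  have hUval : U.val = Matrix.diagonal (fun i => (((v i)⁻¹ : Qˣ) : Q)) * N.map j := by
    rw [hU, Units.val_mul, hu]
    congr 1
  have hUapp : ∀ x y, U.val x y = (j (N x x))⁻¹ * j (N x y) := by
    intro x y
    rw [hUval, Matrix.diagonal_mul]
    simp [hv, Matrix.map_apply]
  have h1 : ∀ x, U.val x x = 1 := by
    intro x
    rw [hUapp, inv_mul_cancel₀ (hjz _ (hpiv x))]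
  have h2 : ∀ x y : Fin d, (y:ℕ) < (x:ℕ) → U.val x y = 0 := by
    intro x y hxy
    rw [hUapp, htri x y hxy, map_zero, mul_zero]
  have hDU : D U = 1 := D_unitri D htv U h1 h2
  have huΔU : u = Δ * U := by
    rw [hU, ← mul_assoc, mul_inv_cancel, one_mul]
  have hDu : D u = ∏ i, Abelianization.of (v i) := by
    rw [huΔU, map_mul, hDU, mul_one]
    exact hD v Δ (by rw [hΔ, dunit_val])
  refine ⟨(List.ofFn (fun i => N i i)).prod, (List.ofFn v).prod, ?_, ?_, ?_⟩
  · apply S.list_prod_ne_zero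
    intro x hx
    obtain ⟨i, rfl⟩ := List.mem_ofFn.1 hx
    exact hpiv i
  · have hval : ((List.ofFn v).prod : Q) = (List.map Units.val (List.ofFn v)).prod :=
      map_list_prod (Units.coeHom Q) _
    rw [hval, List.map_ofFn]
    have : (Units.val ∘ v) = fun i => j (N i i) := by
      funext i; rw [hv]; rfl
    rw [this]
    have : (List.ofFn fun i => j (N i i)) = List.map j (List.ofFn fun i => N i i) := by
      rw [List.map_ofFn]; rfl
    rw [this, ← map_list_prod j]
  · rw [hDu]
    have : Abelianization.of (List.ofFn v).prod
        = (List.map (Abelianization.of (G := Qˣ)) (List.ofFn v)).prod :=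
      map_list_prod Abelianization.of _
    rw [this, List.map_ofFn, List.prod_ofFn]
    rfl
end Elim3

section Elim4
variable {K : Type} [DivisionRing K] {γ : K ≃+* K} {R : Type} [Ring R]
variable {Q : Type} [DivisionRing Q] {d : ℕ}
variable (j : R →+* Q)

def TriP (c : ℕ) (N : Matrix (Fin d) (Fin d) R) : Prop :=
  ∀ x y : Fin d, (y:ℕ) < c → (y:ℕ) < (x:ℕ) → N x y = 0

def PivP (c : ℕ) (N : Matrix (Fin d) (Fin d) R) : Prop :=
  ∀ y : Fin d, (y:ℕ) < c → N y y ≠ 0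

lemma no_unit_of_dead_column (hj : Function.Injective j)
    (c : ℕ) (hc : c < d) (N : Matrix (Fin d) (Fin d) R)
    (htri : TriP c N) (hpiv : PivP c N)
    (hdead : ∀ x : Fin d, c ≤ (x:ℕ) → N x ⟨c, hc⟩ = 0)
    (u : (Matrix (Fin d) (Fin d) Q)ˣ) (hu : u.val = N.map j) : False := by
  set M : Matrix (Fin d) (Fin d) Q := N.map j with hM
  set cf : Fin d := ⟨c, hc⟩ with hcf
  have hjz : ∀ r : R, r ≠ 0 → j r ≠ 0 := by
    intro r hr h0
    exact hr (hj (by rw [h0, map_zero]))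
  have key : ∀ s : ℕ, ∃ x : Fin d → Q, x cf = 1 ∧ (∀ y : Fin d, c < (y:ℕ) → x y = 0) ∧
      ∀ i : Fin d, c - s ≤ (i:ℕ) → (M.mulVec x) i = 0 := by
    intro s
    induction s with
    | zero =>
      refine ⟨Pi.single cf 1, Pi.single_eq_same cf 1, ?_, ?_⟩
      · intro y hy
        apply Pi.single_eq_of_ne
        intro h
        rw [h, hcf] at hy
        simp at hy
      · intro i hi
        rw [Matrix.mulVec_single]
        show M i cf * 1 = 0
        rw [mul_one, hM, Matrix.map_apply, hdead i (by omega), map_zero]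
    | succ s ih =>
      obtain ⟨x, hx1, hx2, hx3⟩ := ih
      by_cases hsc : c ≤ s
      · exact ⟨x, hx1, hx2, fun i hi => hx3 i (by omega)⟩
      · push_neg at hsc
        set i₀f : Fin d := Fin.mk (c - (s+1)) (by omega) with hi₀f
        have hi₀ : (i₀f : ℕ) = c - (s+1) := rfl
        have hi₀c : (i₀f : ℕ) < c := by omega
        have hpivM : M i₀f i₀f ≠ 0 := by
          rw [hM, Matrix.map_apply]
          exact hjz _ (hpiv i₀f hi₀c)
        set δ : Q := -((M i₀f i₀f)⁻¹ * ((M.mulVec x) i₀f)) with hδ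
        set x' : Fin d → Q := x + Pi.single i₀f δ with hx'
        have hne : cf ≠ i₀f := by
          intro h
          have : (cf : ℕ) = (i₀f : ℕ) := by rw [h]
          rw [hcf] at this
          simp [hi₀] at this
          omega
        refine ⟨x', ?_, ?_, ?_⟩
        · rw [hx', Pi.add_apply, hx1, Pi.single_eq_of_ne hne, add_zero]
        · intro y hy
          have hyne : y ≠ i₀f := by
            intro h
            rw [h, hi₀] at hy
            omega
          rw [hx', Pi.add_apply, hx2 y hy, Pi.single_eq_of_ne hyne, add_zero]
        · intro i hi
          rw [hx', Matrix.mulVec_add, Matrix.mulVec_single, Pi.add_apply]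
          by_cases hii : i = i₀f
          · rw [hii]
            show (M.mulVec x) i₀f + M i₀f i₀f * δ = 0
            rw [hδ, mul_neg, ← mul_assoc, mul_inv_cancel₀ hpivM, one_mul, add_neg_cancel]
          · have hii' : c - s ≤ (i : ℕ) := by
              have := Fin.val_ne_of_ne hii
              rw [hi₀] at this
              omega
            show (M.mulVec x) i + M i i₀f * δ = 0
            rw [hx3 i hii']
            have hMz : M i i₀f = 0 := by
              rw [hM, Matrix.map_apply, htri i i₀f hi₀c (by omega), map_zero]
            rw [hMz, zero_mul, add_zero]
  obtain ⟨x, hx1, _, hx3⟩ := key c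
  have hMx : M.mulVec x = 0 := by
    funext i
    exact hx3 i (by omega)
  have hx0 : x = 0 := by
    have h1 : (u⁻¹).val.mulVec (u.val.mulVec x) = x := by
      rw [Matrix.mulVec_mulVec, ← Units.val_mul, inv_mul_cancel, Units.val_one,
        Matrix.one_mulVec]
    rw [hu, hMx, Matrix.mulVec_zero] at h1
    exact h1.symm
  rw [hx0, Pi.zero_apply] at hx1
  exact one_ne_zero hx1.symm
end Elim4

section Elim5
variable {K : Type} [DivisionRing K] {γ : K ≃+* K} {R : Type} [Ring R]
variable {Q : Type} [DivisionRing Q] {d : ℕ}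
variable (S : SkewLaurent K γ R)
variable (j : R →+* Q) (D : (Matrix (Fin d) (Fin d) Q)ˣ →* Abelianization Qˣ)

open Classical in
noncomputable def colW (f : R) : ℕ := if f = 0 then 0 else (S.deg f).toNat + 1

noncomputable def colMeasure (N : Matrix (Fin d) (Fin d) R) (cf : Fin d) : ℕ :=
  ∑ x : Fin d, if (cf:ℕ) ≤ (x:ℕ) then colW S (N x cf) else 0

include S in
lemma elim_inner (hj : Function.Injective j)
    (htv : ∀ (i k : Fin d) (hik : i ≠ k) (c : Q), D (tvec i k hik c) = 1)
    (c k : ℕ) (hck : c + (k+1) = d)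
    (IH : ∀ N' : Matrix (Fin d) (Fin d) R, TriP (c+1) N' → PivP (c+1) N' → GoodDet j D N') :
    ∀ (m : ℕ) (N : Matrix (Fin d) (Fin d) R), TriP c N → PivP c N →
      colMeasure S N ⟨c, by omega⟩ ≤ m → GoodDet j D N := by
  have hcd : c < d := by omega
  set cf : Fin d := ⟨c, hcd⟩ with hcf
  have hcfv : (cf : ℕ) = c := rfl
  have hstep : ∀ N : Matrix (Fin d) (Fin d) R, TriP c N → PivP c N →
      (∀ N' : Matrix (Fin d) (Fin d) R, TriP c N' → PivP c N' →
        colMeasure S N' cf < colMeasure S N cf → GoodDet j D N') →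
      GoodDet j D N := by
    intro N htri hpiv hrec
    by_cases hex : ∃ x : Fin d, c ≤ (x:ℕ) ∧ N x cf ≠ 0
    · obtain ⟨x₀, hx₀c, hx₀⟩ := hex
      classical
      set E := Finset.filter (fun x : Fin d => c ≤ (x:ℕ) ∧ N x cf ≠ 0) Finset.univ with hE
      have hEne : E.Nonempty := ⟨x₀, Finset.mem_filter.2 ⟨Finset.mem_univ _, hx₀c, hx₀⟩⟩
      obtain ⟨p, hpE, hpmin⟩ := Finset.exists_min_image E
        (fun x => (S.deg (N x cf)).toNat) hEne
      have hpc : c ≤ (p:ℕ) := (Finset.mem_filter.1 hpE).2.1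
      have hpne : N p cf ≠ 0 := (Finset.mem_filter.1 hpE).2.2
      by_cases hex2 : ∃ x ∈ E, x ≠ p
      · obtain ⟨x, hxE, hxp⟩ := hex2
        have hxc : c ≤ (x:ℕ) := (Finset.mem_filter.1 hxE).2.1
        have hxne : N x cf ≠ 0 := (Finset.mem_filter.1 hxE).2.2
        obtain ⟨q, r, hqr, hr⟩ := S.division (N p cf) hpne (N x cf)
        set N' := (1 + Matrix.single x p (-q)) * N with hN'
        have hN'app : ∀ a b, N' a b = N a b + (if a = x then (-q) * N p b else 0) :=
          fun a b => by rw [hN', addrow_apply]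
        have hN'r : N' x cf = r := by
          rw [hN'app, if_pos rfl, hqr, neg_mul]
          abel
        have hN'other : ∀ a, a ≠ x → ∀ b, N' a b = N a b :=
          fun a ha b => by rw [hN'app, if_neg ha, add_zero]
        have htri' : TriP c N' := by
          intro a b hbc hba
          rw [hN'app]
          rcases eq_or_ne a x with hax | hax
          · rw [if_pos hax, htri a b hbc hba, htri p b hbc (by omega), mul_zero, add_zero]
          · rw [if_neg hax, add_zero, htri a b hbc hba]
        have hpiv' : PivP c N' := by
          intro y hyc
          have hyx : y ≠ x := by
            intro h
            rw [h] at hyc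
            omega
          rw [hN'other y hyx y]
          exact hpiv y hyc
        have hdec : colMeasure S N' cf < colMeasure S N cf := by
          unfold colMeasure
          apply Finset.sum_lt_sum
          · intro a _
            rcases eq_or_ne a x with hax | hax
            · rw [hax, if_pos (by omega), if_pos (by omega), hN'r]
              unfold colW
              rw [if_neg hxne]
              by_cases hr0 : r = 0
              · rw [if_pos hr0]
                omega
              · rw [if_neg hr0]
                rcases hr with hr | hr
                · exact absurd hr hr0
                have e1 := Int.toNat_of_nonneg (S.deg_nonneg r)
                have e2 := Int.toNat_of_nonneg (S.deg_nonneg (N p cf))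
                have e3 := Int.toNat_of_nonneg (S.deg_nonneg (N x cf))
                have e4 := hpmin x hxE
                omega
            · rw [hN'other a hax]
          · refine ⟨x, Finset.mem_univ x, ?_⟩
            rw [if_pos (by omega), if_pos (by omega), hN'r]
            unfold colW
            rw [if_neg hxne]
            by_cases hr0 : r = 0
            · rw [if_pos hr0]
              omega
            · rw [if_neg hr0]
              rcases hr with hr | hr
              · exact absurd hr hr0
              have e1 := Int.toNat_of_nonneg (S.deg_nonneg r)
              have e2 := Int.toNat_of_nonneg (S.deg_nonneg (N p cf))
              have e3 := Int.toNat_of_nonneg (S.deg_nonneg (N x cf))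
              have e4 := hpmin x hxE
              omega
        have hGD' := hrec N' htri' hpiv' hdec
        apply steprow j D htv x p hxp (-q) N
        rw [← hN']
        exact hGD'
      · push_neg at hex2
        have huniq : ∀ x : Fin d, c ≤ (x:ℕ) → x ≠ p → N x cf = 0 := by
          intro x hxc hxp
          by_contra hv
          exact hxp (hex2 x (Finset.mem_filter.2 ⟨Finset.mem_univ _, hxc, hv⟩))
        by_cases hpcf : p = cf
        · apply IH N
          · intro a b hbc hba
            by_cases hbc' : (b:ℕ) < c
            · exact htri a b hbc' hba
            · have hbv : (b:ℕ) = c := by omega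
              have hbcf : b = cf := Fin.ext (by rw [hbv, hcfv])
              subst hbcf
              have hap : a ≠ p := by
                intro h
                have h1 : (a:ℕ) = (p:ℕ) := by rw [h]
                have h2 : (p:ℕ) = c := by rw [hpcf, hcfv]
                omega
              exact huniq a (by omega) hap
          · intro y hyc
            by_cases hyc' : (y:ℕ) < c
            · exact hpiv y hyc'
            · have hyv : (y:ℕ) = c := by omega
              have hycf : y = cf := Fin.ext (by rw [hyv, hcfv])
              subst hycf
              rw [hpcf] at hpne
              exact hpne
        · have hcfp : cf ≠ p := Ne.symm hpcf
          set N' := swmat cf p * N with hN'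
          have hN'app : ∀ a b, N' a b
              = if a = cf then N p b else if a = p then -(N cf b) else N a b :=
            fun a b => by rw [hN', swmat_mul_apply cf p hcfp]
          have hNcfcf : N cf cf = 0 := huniq cf (by omega) hcfp
          have htri'' : TriP (c+1) N' := by
            intro a b hbc hba
            rw [hN'app]
            by_cases hbc' : (b:ℕ) < c
            · rcases eq_or_ne a cf with hacf | hacf
              · rw [if_pos hacf, htri p b hbc' (by omega)]
              · rw [if_neg hacf]
                rcases eq_or_ne a p with hap | hap
                · rw [if_pos hap, htri cf b hbc' (by omega), neg_zero]
                · rw [if_neg hap, htri a b hbc' hba]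
            · have hbv : (b:ℕ) = c := by omega
              have hbcf : b = cf := Fin.ext (by rw [hbv, hcfv])
              subst hbcf
              have hacf : a ≠ cf := by
                intro h
                rw [h] at hba
                omega
              rw [if_neg hacf]
              rcases eq_or_ne a p with hap | hap
              · rw [if_pos hap, hNcfcf, neg_zero]
              · rw [if_neg hap, huniq a (by omega) hap]
          have hpiv'' : PivP (c+1) N' := by
            intro y hyc
            rw [hN'app]
            by_cases hyc' : (y:ℕ) < c
            · have hycf : y ≠ cf := by
                intro h
                rw [h] at hyc'
                omega
              have hyp : y ≠ p := by
                intro h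
                rw [h] at hyc'
                omega
              rw [if_neg hycf, if_neg hyp]
              exact hpiv y hyc'
            · have hyv : (y:ℕ) = c := by omega
              have hycf : y = cf := Fin.ext (by rw [hyv, hcfv])
              subst hycf
              rw [if_pos rfl]
              exact hpne
          have hGD' := IH N' htri'' hpiv''
          apply stepswap j D htv cf p hcfp N
          rw [← hN']
          exact hGD'
    · push_neg at hex
      intro u hu
      exact (no_unit_of_dead_column j hj c hcd N htri hpiv
        (fun x hx => hex x hx) u hu).elim
  intro m
  induction m with
  | zero =>
    intro N htri hpiv hmeas
    exact hstep N htri hpiv (fun N' _ _ hlt => absurd hlt (by omega))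
  | succ m ihm =>
    intro N htri hpiv hmeas
    exact hstep N htri hpiv (fun N' ht' hp' hlt => ihm N' ht' hp' (by omega))

include S in
lemma elim_outer (hj : Function.Injective j)
    (htv : ∀ (i k : Fin d) (hik : i ≠ k) (c : Q), D (tvec i k hik c) = 1)
    (hD : ∀ (v : Fin d → Qˣ) (M : (Matrix (Fin d) (Fin d) Q)ˣ),
      M.val = Matrix.diagonal (fun i => (v i : Q)) →
      D M = ∏ i, Abelianization.of (v i)) :
    ∀ (k c : ℕ), c + k = d → ∀ N : Matrix (Fin d) (Fin d) R,
      TriP c N → PivP c N → GoodDet j D N := by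
  intro k
  induction k with
  | zero =>
    intro c hck N ht hp
    apply gooddet_triangular S j D hj htv hD N
    · intro x y hyx
      exact ht x y (by omega) hyx
    · intro x
      exact hp x (by omega)
  | succ k ihk =>
    intro c hck N ht hp
    exact elim_inner S j D hj htv c k hck
      (fun N' ht' hp' => ihk (c+1) (by omega) N' ht' hp')
      (colMeasure S N ⟨c, by omega⟩) N ht hp le_rfl

include S in
lemma gooddet_all (hj : Function.Injective j)
    (htv : ∀ (i k : Fin d) (hik : i ≠ k) (c : Q), D (tvec i k hik c) = 1)
    (hD : ∀ (v : Fin d → Qˣ) (M : (Matrix (Fin d) (Fin d) Q)ˣ),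
      M.val = Matrix.diagonal (fun i => (v i : Q)) →
      D M = ∏ i, Abelianization.of (v i))
    (N : Matrix (Fin d) (Fin d) R) : GoodDet j D N :=
  elim_outer S j D hj htv hD d 0 (by omega) N
    (fun x y hy _ => absurd hy (by omega)) (fun y hy => absurd hy (by omega))

end Elim5

/-- Let `Q = K_γ(t)` be the quotient skew field of `R = K_γ[t^{±1}]`,
`Ddeg : Qˣ → ℤ` the degree homomorphism, and `D` the Dieudonné determinant on
`d×d` matrices over `Q` (a homomorphism `GL_d(Q) → Qˣ_{ab}` sending invertible diagonal
matrices to the product of their diagonal entries).  If `A` is a `d×d` matrix over `R`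
which is invertible over `R` itself, then `deg (det A) = 0`; equivalently `det A` is
represented by an element `k t^e` with `k ∈ K∖{0}`, `e ∈ ℤ`. -/
theorem skewLaurent_det_of_GL_over_R
    (K : Type) [DivisionRing K] (γ : K ≃+* K) (R : Type) [Ring R]
    (S : SkewLaurent K γ R)
    (Q : Type) [DivisionRing Q] (j : R →+* Q) (hj : Function.Injective j)
    (hOre : ∀ q : Q, ∃ f g : R, g ≠ 0 ∧ q = j f * (j g)⁻¹)
    (Ddeg : Qˣ →* Multiplicative ℤ)
    (hDdeg : ∀ (f : R), f ≠ 0 → ∀ u : Qˣ, (u : Q) = j f → Ddeg u = Multiplicative.ofAdd (S.deg f))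
    (d : ℕ) (D : (Matrix (Fin d) (Fin d) Q)ˣ →* Abelianization Qˣ)
    (hD : ∀ (v : Fin d → Qˣ) (M : (Matrix (Fin d) (Fin d) Q)ˣ),
      M.val = Matrix.diagonal (fun i => (v i : Q)) →
      D M = ∏ i, Abelianization.of (v i))
    (A : Matrix (Fin d) (Fin d) R) (hA : IsUnit A)
    (u : (Matrix (Fin d) (Fin d) Q)ˣ) (hu : u.val = A.map j) :
    Abelianization.lift Ddeg (D u) = 1 ∧
    ∃ (k : K) (e : ℤ) (w : Qˣ), k ≠ 0 ∧
      w.val = j (S.ι k * ((S.t ^ e : Rˣ) : R)) ∧ D u = Abelianization.of w := by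
  have hjz : ∀ r : R, r ≠ 0 → j r ≠ 0 := by
    intro r hr h0
    exact hr (hj (by rw [h0, map_zero]))
  -- the element a = j t for transvection triviality
  have ht0 : ((S.t : Rˣ) : R) ≠ 0 := by
    intro h
    have ht : ((S.t : Rˣ) : R) = S.repr (Finsupp.single 1 1) := by
      rw [S.repr_single]
      simp
    rw [ht] at h
    have h2 : Finsupp.single (1:ℤ) (1:K) = 0 := by
      apply S.repr.injective
      rw [h, map_zero]
    have h3 := Finsupp.ext_iff.1 h2 1
    rw [Finsupp.single_eq_same] at h3
    exact one_ne_zero h3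
  have ha : j ((S.t : Rˣ) : R) ≠ 0 := hjz _ ht0
  have ha1 : j ((S.t : Rˣ) : R) - 1 ≠ 0 := by
    rw [← map_one j, ← map_sub]
    exact hjz _ S.t_sub_one_ne_zero
  have htv : ∀ (i k : Fin d) (hik : i ≠ k) (c : Q), D (tvec i k hik c) = 1 :=
    fun i k hik c => D_tvec D _ ha ha1 i k hik c
  -- inverse matrix over R
  set B : Matrix (Fin d) (Fin d) R := (hA.unit⁻¹).val with hB
  have hAB : A * B = 1 := hA.mul_val_inv
  have huinv : (u⁻¹).val = B.map j := by
    have h1 : u.val * (B.map j) = 1 := by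
      rw [hu, ← Matrix.map_mul, hAB, Matrix.map_one ⇑j (map_zero j) (map_one j)]
    calc (u⁻¹).val = (u⁻¹).val * (u.val * B.map j) := by rw [h1, mul_one]
      _ = ((u⁻¹).val * u.val) * B.map j := (mul_assoc _ _ _).symm
      _ = B.map j := by rw [← Units.val_mul, inv_mul_cancel, Units.val_one, one_mul]
  -- Dieudonné determinants represented by elements of R
  obtain ⟨f, w1, hf, hw1, hDu1⟩ := gooddet_all S j D hj htv hD A u hu
  obtain ⟨g, w2, hg, hw2, hDu2⟩ := gooddet_all S j D hj htv hD B u⁻¹ huinv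
  have hfg : f * g ≠ 0 := S.mul_ne_zero' f g hf hg
  have hw12 : ((w1 * w2 : Qˣ) : Q) = j (f * g) := by
    rw [Units.val_mul, hw1, hw2, map_mul]
  have hof : Abelianization.of (w1 * w2) = 1 := by
    rw [map_mul, ← hDu1, ← hDu2, ← map_mul, mul_inv_cancel, map_one]
  have hlift : Ddeg (w1 * w2) = 1 := by
    have := congrArg (Abelianization.lift Ddeg) hof
    rw [Abelianization.lift_apply_of, map_one] at this
    exact this
  have hdegfg : S.deg (f * g) = 0 := by
    have h1 := hDdeg (f * g) hfg (w1 * w2) hw12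
    rw [hlift] at h1
    have h2 : Multiplicative.ofAdd (S.deg (f * g)) = Multiplicative.ofAdd (0 : ℤ) := by
      rw [← h1]
      rfl
    exact Multiplicative.ofAdd.injective h2
  have hdegf : S.deg f = 0 := by
    have h1 := S.deg_mul f g hf hg
    have h2 := S.deg_nonneg f
    have h3 := S.deg_nonneg g
    omega
  obtain ⟨k, e, hk, hfke⟩ := S.deg_zero_monomial f hf hdegf
  constructor
  · rw [hDu1, Abelianization.lift_apply_of, hDdeg f hf w1 hw1, hdegf]
    rfl
  · exact ⟨k, e, w1, hk, by rw [hw1, hfke], hDu1⟩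
end
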